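/- For a single-layer network with componentwise monotone non-decreasing activation f, the maximum sensitivity ε(x,δ) = sup{‖f(W(x+Δx)+θ) − f(Wx+θ)‖_∞ : ‖Δx‖_∞ ≤ δ} satisfies ε(x,δ) ≤ max_i max{|f(β_{i,max}) − f((Wx)_i+θ_i)|, |f(β_{i,min}) − f((Wx)_i+θ_i)|}, where β_{i,max/min} = (Wx)_i + θ_i ± δ‖W_i‖₁. -/

import Mathlib

/-! By Hölder's inequality (ℓ¹ against ℓ∞), each pre-activation `(W (x + Δx))_i + θ_i` stays in
the interval `[β_{i,min}, β_{i,max}]`; a monotone `f` maps a point of an interval to a value lying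
between its values at the endpoints, so its deviation from `f ((W x)_i + θ_i)` is at most the larger
of the two endpoint deviations. -/

open Finset Matrix

lemma abs_dotProduct_le_mul_sum_abs {ι : Type*} [Fintype ι] (w v : ι → ℝ) {δ : ℝ}
    (hv : ‖v‖ ≤ δ) : |w ⬝ᵥ v| ≤ δ * ∑ j, |w j| := by
  calc |w ⬝ᵥ v| ≤ ∑ j, |w j * v j| := abs_sum_le_sum_abs _ _
    _ ≤ ∑ j, |w j| * δ := by
        gcongr with j
        rw [abs_mul]
        exact mul_le_mul_of_nonneg_left ((norm_le_pi_norm v j).trans hv) (abs_nonneg _)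
    _ = δ * ∑ j, |w j| := by rw [← sum_mul, mul_comm]

lemma Monotone.abs_sub_le_max_of_mem_Icc {α β : Type*} [Preorder α]
    [AddCommGroup β] [LinearOrder β] [IsOrderedAddMonoid β] {f : α → β} (hf : Monotone f)
    {a b p : α} (c : α) (hp : p ∈ Set.Icc a b) :
    |f p - f c| ≤ max |f b - f c| |f a - f c| := by
  rw [abs_sub_le_iff]
  constructor
  · exact le_max_of_le_left <| (sub_le_sub_right (hf hp.2) _).trans (le_abs_self _)
  · refine le_max_of_le_right <| (sub_le_sub_left (hf hp.1) _).trans ?_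
    rw [abs_sub_comm]
    exact le_abs_self _

theorem single_layer_max_sensitivity_bound_general {m n : ℕ} (hm : 0 < m)
    (W : Matrix (Fin m) (Fin n) ℝ) (θ : Fin m → ℝ) (x : Fin n → ℝ)
    (δ : ℝ) (f : ℝ → ℝ) (hf : Monotone f) :
    sSup {ε | ∃ Δx : Fin n → ℝ, ‖Δx‖ ≤ δ ∧
        ε = ‖(fun i => f (W.mulVec (x + Δx) i + θ i)) -
             (fun i => f (W.mulVec x i + θ i))‖} ≤
      Finset.univ.sup' (Finset.univ_nonempty_iff.mpr ⟨⟨0, hm⟩⟩) (fun i =>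
        max |f (W.mulVec x i + θ i + δ * ∑ j, |W i j|) - f (W.mulVec x i + θ i)|
            |f (W.mulVec x i + θ i - δ * ∑ j, |W i j|) - f (W.mulVec x i + θ i)|) := by
  have : Nonempty (Fin m) := ⟨⟨0, hm⟩⟩
  -- The bound is nonnegative, which also covers `δ < 0`, where the set is empty and `sSup ∅ = 0`.
  refine Real.sSup_le ?_ (le_sup'_of_le _ (mem_univ ⟨0, hm⟩) (le_max_of_le_left (abs_nonneg _)))
  rintro _ ⟨Δx, hΔx, rfl⟩
  refine (pi_norm_le_iff_of_nonempty _).2 fun i => ?_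
  have hdev : |(W *ᵥ Δx) i| ≤ δ * ∑ j, |W i j| := abs_dotProduct_le_mul_sum_abs (W i) Δx hΔx
  have hmem : W.mulVec (x + Δx) i + θ i ∈
      Set.Icc (W.mulVec x i + θ i - δ * ∑ j, |W i j|) (W.mulVec x i + θ i + δ * ∑ j, |W i j|) := by
    rw [mulVec_add, Pi.add_apply]
    constructor <;> linarith [abs_le.1 hdev]
  rw [Pi.sub_apply, Real.norm_eq_abs]
  exact le_sup'_of_le _ (mem_univ i) (hf.abs_sub_le_max_of_mem_Icc _ hmem)

theorem single_layer_max_sensitivity_bound {m n : ℕ} (hm : 0 < m)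
    (W : Matrix (Fin m) (Fin n) ℝ) (θ : Fin m → ℝ) (x : Fin n → ℝ)
    (δ : ℝ) (hδ : 0 ≤ δ) (f : ℝ → ℝ) (hf : Monotone f) :
    sSup {ε | ∃ Δx : Fin n → ℝ, ‖Δx‖ ≤ δ ∧
        ε = ‖(fun i => f (W.mulVec (x + Δx) i + θ i)) -
             (fun i => f (W.mulVec x i + θ i))‖} ≤
      Finset.univ.sup' (Finset.univ_nonempty_iff.mpr ⟨⟨0, hm⟩⟩) (fun i =>
        max |f (W.mulVec x i + θ i + δ * ∑ j, |W i j|) - f (W.mulVec x i + θ i)|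
            |f (W.mulVec x i + θ i - δ * ∑ j, |W i j|) - f (W.mulVec x i + θ i)|) :=
  single_layer_max_sensitivity_bound_general hm W θ x δ f hf
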